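/- arXiv:1407.8353 — 4 statements merged into one kernel-verified Lean document; each statement's English description precedes it below -/
import Mathlib

section
/- Let X be a Markov chain on E with transition kernel P and n-step transition probabilities P_n(x,·), and let μ be an invariant probability measure for X. Assume that for μ ⊗ μ-almost all pairs (x, y) ∈ E × E there exists n = n_{x,y} ∈ ℕ such that the measures P_n(x,·) and P_n(y,·) are not mutually singular. Then for μ-almost all x ∈ E the total variation distance ‖P_n(x,·) − μ‖ tends to 0 as n → ∞. -/
open MeasureTheory ProbabilityTheory Filter ENNReal

/-- The total variation distance `‖μ - ν‖` between two (probability) measures,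
with values in `[0,2]`: `‖μ - ν‖ = 2 ⨆_{A measurable} |μ A - ν A|`. -/
noncomputable def tvDist {E : Type*} [MeasurableSpace E] (μ ν : Measure E) : ℝ≥0∞ :=
  2 * ⨆ (A : Set E) (_ : MeasurableSet A), ((μ A - ν A) ⊔ (ν A - μ A))

/-- The `n`-step transition kernel `P_n` of a Markov kernel `P`. -/
noncomputable def nStep {E : Type*} [MeasurableSpace E] (P : ProbabilityTheory.Kernel E E) :
    ℕ → ProbabilityTheory.Kernel E E
  | 0 => ProbabilityTheory.Kernel.id
  | n + 1 => (nStep P n) ∘ₖ P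

/-!
Write `m_n(x, y)` for the mass of the largest measure below both `P_n(x, ·)` and `P_n(y, ·)`. It
is nondecreasing in `n`, with limit `h(x, y) ≤ 1`, and invariance of `μ` gives
`‖P_n(x, ·) - μ‖ ≤ 2 ∫ (1 - m_n(x, y)) μ(dy)`. Running the two copies of the chain independently
for `n` steps shows that `h` is superharmonic for the product kernel `Q_n = P_n ⊗ P_n`, which
leaves `μ ⊗ μ` invariant; a bounded superharmonic function is then constant along `Q_n`-transitions
from `μ ⊗ μ`-almost every point (a second-moment argument). If instead the common parts move
together and the remainders, each of mass `1 - m` with `m = m_n(x, y)`, independently, this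
constancy turns the coupling bound into `(1 - m) m + h (1 - m)² ≤ (1 - m) h`, so `m = 0` or
`h = 1`. Non-singularity rules out `m_n = 0` for every `n`, hence `h = 1` almost everywhere, and
the total variation bound tends to `0` by dominated convergence.
-/

open Set Topology

lemma ENNReal.eq_zero_or_eq_one_of_mul_le {m h : ℝ≥0∞} (hmh : m ≤ h) (h1 : h ≤ 1)
    (H : (1 - m) * m + h * (1 - m) ^ 2 ≤ (1 - m) * h) : m = 0 ∨ h = 1 := by
  rcases eq_or_ne m 0 with hm0 | hm0
  · exact .inl hm0
  refine .inr (le_antisymm h1 ?_)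
  rcases eq_or_ne (1 - m) 0 with ha0 | ha0
  · exact (tsub_eq_zero_iff_le.1 ha0).trans hmh
  have hm1 : m ≤ 1 := hmh.trans h1
  have ha : 1 - m ≠ ∞ := sub_ne_top one_ne_top
  have H' : m + h * (1 - m) ≤ h * m + h * (1 - m) := by
    rw [← mul_add, add_tsub_cancel_of_le hm1, mul_one,
      ← ENNReal.mul_le_mul_iff_right ha0 ha, mul_add, mul_left_comm, ← sq]
    exact H
  have hmm : 1 * m ≤ h * m := by
    rw [one_mul]
    exact (ENNReal.add_le_add_iff_right (mul_ne_top (h1.trans_lt one_lt_top).ne ha)).1 H'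
  exact (ENNReal.mul_le_mul_iff_left hm0 (hm1.trans_lt one_lt_top).ne).1 hmm

-- One of the truncated differences vanishes, so `(a - b) ^ 2 + (b - a) ^ 2` is `|a - b| ^ 2`.
lemma ENNReal.tsub_sq_add_tsub_sq_add_two_mul {a b : ℝ≥0∞} (ha : a ≠ ∞) (hb : b ≠ ∞) :
    (a - b) ^ 2 + (b - a) ^ 2 + 2 * a * b = a ^ 2 + b ^ 2 := by
  rcases le_total a b with hab | hab
  · obtain ⟨c, rfl⟩ := exists_add_of_le hab
    rw [tsub_eq_zero_of_le hab, ENNReal.add_sub_cancel_left ha]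
    ring
  · obtain ⟨c, rfl⟩ := exists_add_of_le hab
    rw [tsub_eq_zero_of_le hab, ENNReal.add_sub_cancel_left hb]
    ring

/- With `D z w = |u w - u z| ^ 2`, invariance gives `∫∫ D + 2 ∫ u · Qu = 2 ∫ u ^ 2`, while
`u ≤ Qu` gives `∫ u · Qu ≥ ∫ u ^ 2`; hence `∫∫ D = 0`. -/
theorem ae_ae_eq_of_le_lintegral {γ : Type*} [MeasurableSpace γ] {Q : Kernel γ γ}
    [IsMarkovKernel Q] {θ : Measure γ} (hθ : Q ∘ₘ θ = θ) {u : γ → ℝ≥0∞} (hu : Measurable u)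
    (hu_top : ∀ z, u z ≠ ∞) (hu_sq : ∫⁻ z, u z ^ 2 ∂θ ≠ ∞)
    (hsub : ∀ z, u z ≤ ∫⁻ w, u w ∂Q z) : ∀ᵐ z ∂θ, ∀ᵐ w ∂Q z, u w = u z := by
  set D : γ → γ → ℝ≥0∞ := fun z w ↦ (u w - u z) ^ 2 + (u z - u w) ^ 2 with hD
  have hD_meas : Measurable (Function.uncurry D) := by
    simp only [hD]; fun_prop
  have hD_int : Measurable fun z ↦ ∫⁻ w, D z w ∂Q z :=
    hD_meas.lintegral_kernel_prod_right'
  have hsq : Measurable fun z ↦ u z ^ 2 := hu.pow_const 2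
  have key : ∫⁻ z, ∫⁻ w, D z w ∂Q z ∂θ + 2 * ∫⁻ z, u z ^ 2 ∂θ ≤ 0 + 2 * ∫⁻ z, u z ^ 2 ∂θ := by
    calc ∫⁻ z, ∫⁻ w, D z w ∂Q z ∂θ + 2 * ∫⁻ z, u z ^ 2 ∂θ
        ≤ ∫⁻ z, (∫⁻ w, D z w ∂Q z + 2 * u z * ∫⁻ w, u w ∂Q z) ∂θ := by
          rw [lintegral_add_left hD_int, ← lintegral_const_mul _ hsq]
          refine add_le_add le_rfl (lintegral_mono fun z ↦ ?_)
          rw [sq, ← mul_assoc]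
          gcongr; exact hsub z
      _ = ∫⁻ z, ∫⁻ w, (D z w + 2 * u z * u w) ∂Q z ∂θ := by
          congr with z
          rw [lintegral_add_left (hD_meas.of_uncurry_left), lintegral_const_mul _ hu]
      _ = ∫⁻ z, ∫⁻ w, (u w ^ 2 + u z ^ 2) ∂Q z ∂θ := by
          congr with z
          congr with w
          rw [hD, mul_right_comm, ENNReal.tsub_sq_add_tsub_sq_add_two_mul (hu_top w) (hu_top z)]
      _ = ∫⁻ z, ∫⁻ w, u w ^ 2 ∂Q z ∂θ + ∫⁻ z, u z ^ 2 ∂θ := by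
          simp_rw [lintegral_add_right _ measurable_const, lintegral_const, measure_univ, mul_one]
          exact lintegral_add_right _ hsq
      _ = 0 + 2 * ∫⁻ z, u z ^ 2 ∂θ := by
          rw [← Measure.lintegral_bind Q.aemeasurable hsq.aemeasurable, hθ, zero_add, two_mul]
  have hzero := (lintegral_eq_zero_iff hD_int).1 <|
    nonpos_iff_eq_zero.1 (ENNReal.le_of_add_le_add_right (by finiteness) key)
  filter_upwards [hzero] with z hz
  filter_upwards [(lintegral_eq_zero_iff hD_meas.of_uncurry_left).1 hz] with w hw
  simp only [hD, Pi.zero_apply, add_eq_zero, pow_eq_zero_iff two_ne_zero, tsub_eq_zero_iff_le] at hw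
  exact le_antisymm hw.1 hw.2

lemma MeasureTheory.Measure.parallelComp_comp_prod {α β γ δ : Type*} [MeasurableSpace α]
    [MeasurableSpace β] [MeasurableSpace γ] [MeasurableSpace δ] {μ : Measure α} {ν : Measure β}
    [SFinite μ] [SFinite ν] {κ : Kernel α γ} {η : Kernel β δ} [IsSFiniteKernel κ]
    [IsSFiniteKernel η] : (κ ∥ₖ η) ∘ₘ (μ.prod ν) = (κ ∘ₘ μ).prod (η ∘ₘ ν) := by
  rw [prod_comp_right, prod_comp_left, comp_assoc, Kernel.parallelComp_comp_parallelComp,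
    Kernel.comp_id, Kernel.id_comp]

namespace ProbabilityTheory.Kernel

variable {α β : Type*} [MeasurableSpace α] [MeasurableSpace β]

section CommonPart

variable [MeasurableSpace.CountablyGenerated β] (κ η : Kernel α β) [IsFiniteKernel κ]
  [IsFiniteKernel η]

-- `commonPart κ η a = κ a ⊓ η a` (see `le_smul_commonPart`), written with densities with respect
-- to `κ + η` so that it is measurable in `a`.
noncomputable def commonPart : Kernel α β :=
  (κ + η).withDensity fun a b ↦ min (κ.rnDeriv (κ + η) a b) (η.rnDeriv (κ + η) a b)

noncomputable def excess : Kernel α β :=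
  (κ + η).withDensity fun a b ↦ κ.rnDeriv (κ + η) a b - η.rnDeriv (κ + η) a b

lemma commonPart_comm : commonPart κ η = commonPart η κ := by
  simp only [commonPart, add_comm η κ, min_comm]

lemma commonPart_add_excess (a : α) : commonPart κ η a + excess κ η a = κ a := by
  have hκ := κ.measurable_rnDeriv (κ + η)
  have hη := η.measurable_rnDeriv (κ + η)
  rw [commonPart, excess, Kernel.withDensity_apply _ (hκ.min hη),
    Kernel.withDensity_apply _ (hκ.sub hη), ← MeasureTheory.withDensity_add_left
      ((κ.measurable_rnDeriv_right _ a).min (η.measurable_rnDeriv_right _ a))]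
  have hsum : (fun b ↦ min (κ.rnDeriv (κ + η) a b) (η.rnDeriv (κ + η) a b))
      + (fun b ↦ κ.rnDeriv (κ + η) a b - η.rnDeriv (κ + η) a b) = κ.rnDeriv (κ + η) a := by
    ext b; exact (add_comm _ _).trans tsub_add_min
  rw [hsum, ← Kernel.withDensity_apply _ hκ, withDensity_rnDeriv_eq]
  exact Measure.absolutelyContinuous_of_le (Measure.le_add_right le_rfl)

lemma commonPart_add_excess_swap (a : α) : commonPart κ η a + excess η κ a = η a := by
  rw [commonPart_comm, commonPart_add_excess]

lemma excess_le (a : α) : excess κ η a ≤ κ a :=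
  commonPart_add_excess κ η a ▸ Measure.le_add_left le_rfl

instance (a : α) : IsFiniteMeasure (excess κ η a) := isFiniteMeasure_of_le (κ a) (excess_le κ η a)

lemma commonPart_le_left (a : α) : commonPart κ η a ≤ κ a :=
  commonPart_add_excess κ η a ▸ Measure.le_add_right le_rfl

lemma commonPart_le_right (a : α) : commonPart κ η a ≤ η a :=
  commonPart_add_excess_swap κ η a ▸ Measure.le_add_right le_rfl

lemma excess_mutuallySingular (a : α) : excess κ η a ⟂ₘ excess η κ a := by
  have hκ := κ.measurable_rnDeriv_right (κ + η) a
  have hη := η.measurable_rnDeriv_right (κ + η) a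
  have hS : MeasurableSet {b | κ.rnDeriv (κ + η) a b ≤ η.rnDeriv (κ + η) a b} :=
    measurableSet_le hκ hη
  refine ⟨_, hS, ?_, ?_⟩
  · rw [excess, Kernel.withDensity_apply' _ ((κ.measurable_rnDeriv _).sub (η.measurable_rnDeriv _))]
    exact setLIntegral_eq_zero hS fun b hb ↦ tsub_eq_zero_of_le hb
  · rw [excess, Kernel.withDensity_apply' _ ((η.measurable_rnDeriv _).sub (κ.measurable_rnDeriv _)),
      add_comm η κ]
    exact setLIntegral_eq_zero hS.compl fun b (hb : ¬ _) ↦ tsub_eq_zero_of_le (not_le.1 hb).le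

lemma le_smul_commonPart {a : α} {ρ : Measure β} {c : ℝ≥0∞} (hκ : ρ ≤ c • κ a)
    (hη : ρ ≤ c • η a) : ρ ≤ c • commonPart κ η a := by
  obtain ⟨S, hS, hκS, hηS⟩ := excess_mutuallySingular κ η a
  refine Measure.le_iff'.2 fun s ↦ ?_
  have hin : ρ (s ∩ S) ≤ c * commonPart κ η a (s ∩ S) := by
    have := Measure.le_iff'.1 hκ (s ∩ S)
    rwa [← commonPart_add_excess κ η a, Measure.smul_apply, Measure.add_apply,
      measure_mono_null inter_subset_right hκS, add_zero, smul_eq_mul] at this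
  have hout : ρ (s \ S) ≤ c * commonPart κ η a (s \ S) := by
    have := Measure.le_iff'.1 hη (s \ S)
    rwa [← commonPart_add_excess_swap κ η a, Measure.smul_apply, Measure.add_apply,
      measure_mono_null (sdiff_subset_compl s S) hηS, add_zero, smul_eq_mul] at this
  rw [Measure.smul_apply, smul_eq_mul, ← measure_inter_add_sdiff s hS,
    ← measure_inter_add_sdiff s hS, mul_add]
  exact add_le_add hin hout

lemma mutuallySingular_of_commonPart_eq_zero {a : α} (h : commonPart κ η a = 0) :
    κ a ⟂ₘ η a := by
  rw [← commonPart_add_excess κ η a, ← commonPart_add_excess_swap κ η a, h, zero_add, zero_add]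
  exact excess_mutuallySingular κ η a

lemma measure_sub_measure_le_excess (a : α) (s : Set β) : κ a s - η a s ≤ excess κ η a univ := by
  rw [tsub_le_iff_left, ← commonPart_add_excess κ η a, Measure.add_apply]
  exact add_le_add (Measure.le_iff'.1 (commonPart_le_right κ η a) s) (measure_mono (subset_univ s))

end CommonPart

section Overlap

variable [MeasurableSpace.CountablyGenerated β]

noncomputable def pairCommon (K : Kernel α β) [IsFiniteKernel K] : Kernel (α × α) β :=
  commonPart (prodMkRight α K) (prodMkLeft α K)

-- `overlap K (x, y) = 1 - ‖K x - K y‖ / 2`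
noncomputable def overlap (K : Kernel α β) [IsFiniteKernel K] (z : α × α) : ℝ≥0∞ :=
  pairCommon K z univ

variable (K : Kernel α β) [IsFiniteKernel K]

lemma fst_eq_pairCommon_add (z : α × α) :
    K z.1 = pairCommon K z + excess (prodMkRight α K) (prodMkLeft α K) z :=
  (commonPart_add_excess (prodMkRight α K) (prodMkLeft α K) z).symm

lemma snd_eq_pairCommon_add (z : α × α) :
    K z.2 = pairCommon K z + excess (prodMkLeft α K) (prodMkRight α K) z :=
  (commonPart_add_excess_swap (prodMkRight α K) (prodMkLeft α K) z).symm

lemma pairCommon_le_fst (z : α × α) : pairCommon K z ≤ K z.1 := commonPart_le_left _ _ z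

lemma pairCommon_le_snd (z : α × α) : pairCommon K z ≤ K z.2 := commonPart_le_right _ _ z

lemma measurable_overlap : Measurable (overlap K) :=
  (pairCommon K).measurable_coe MeasurableSet.univ

lemma le_smul_overlap {z : α × α} {ρ : Measure β} {c : ℝ≥0∞} (h₁ : ρ ≤ c • K z.1)
    (h₂ : ρ ≤ c • K z.2) : ρ univ ≤ c * overlap K z :=
  Measure.le_iff'.1 (le_smul_commonPart (prodMkRight α K) (prodMkLeft α K) h₁ h₂) univ

lemma mutuallySingular_of_overlap_eq_zero {z : α × α} (h : overlap K z = 0) : K z.1 ⟂ₘ K z.2 :=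
  mutuallySingular_of_commonPart_eq_zero _ _ (Measure.measure_univ_eq_zero.1 h)

lemma pairCommon_comp_prod_le_fst (ρ₁ ρ₂ : Measure α) [SFinite ρ₂] :
    pairCommon K ∘ₘ (ρ₁.prod ρ₂) ≤ ρ₂ univ • K ∘ₘ ρ₁ := by
  refine Measure.le_iff.2 fun s hs ↦ ?_
  rw [Measure.smul_apply, smul_eq_mul, Measure.bind_apply hs (Kernel.aemeasurable _),
    Measure.bind_apply hs (Kernel.aemeasurable _)]
  calc ∫⁻ z, pairCommon K z s ∂(ρ₁.prod ρ₂)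
      ≤ ∫⁻ z, K z.1 s ∂(ρ₁.prod ρ₂) := lintegral_mono fun z ↦ pairCommon_le_fst K z s
    _ = ∫⁻ x, K x s ∂(ρ₁.prod ρ₂).map Prod.fst :=
      (MeasureTheory.lintegral_map (K.measurable_coe hs) measurable_fst).symm
    _ = ρ₂ univ * ∫⁻ x, K x s ∂ρ₁ := by
      rw [Measure.map_fst_prod, lintegral_smul_measure, smul_eq_mul]

lemma pairCommon_comp_prod_le_snd (ρ₁ ρ₂ : Measure α) [SFinite ρ₂] :
    pairCommon K ∘ₘ (ρ₁.prod ρ₂) ≤ ρ₁ univ • K ∘ₘ ρ₂ := by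
  refine Measure.le_iff.2 fun s hs ↦ ?_
  rw [Measure.smul_apply, smul_eq_mul, Measure.bind_apply hs (Kernel.aemeasurable _),
    Measure.bind_apply hs (Kernel.aemeasurable _)]
  calc ∫⁻ z, pairCommon K z s ∂(ρ₁.prod ρ₂)
      ≤ ∫⁻ z, K z.2 s ∂(ρ₁.prod ρ₂) := lintegral_mono fun z ↦ pairCommon_le_snd K z s
    _ = ∫⁻ y, K y s ∂(ρ₁.prod ρ₂).map Prod.snd :=
      (MeasureTheory.lintegral_map (K.measurable_coe hs) measurable_snd).symm
    _ = ρ₁ univ * ∫⁻ y, K y s ∂ρ₂ := by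
      rw [Measure.map_snd_prod, lintegral_smul_measure, smul_eq_mul]

variable [IsMarkovKernel K]

lemma overlap_le_one (z : α × α) : overlap K z ≤ 1 :=
  (pairCommon_le_fst K z univ).trans_eq measure_univ

lemma excess_prodMkRight_apply_univ (z : α × α) :
    excess (prodMkRight α K) (prodMkLeft α K) z univ = 1 - overlap K z := by
  have := congrArg (· univ) (commonPart_add_excess (prodMkRight α K) (prodMkLeft α K) z)
  simp only [Measure.add_apply, prodMkRight_apply, measure_univ] at this
  exact ENNReal.eq_sub_of_add_eq' one_ne_top (by rwa [add_comm] at this)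

lemma excess_prodMkLeft_apply_univ (z : α × α) :
    excess (prodMkLeft α K) (prodMkRight α K) z univ = 1 - overlap K z := by
  have := congrArg (· univ) (commonPart_add_excess_swap (prodMkRight α K) (prodMkLeft α K) z)
  simp only [Measure.add_apply, prodMkLeft_apply, measure_univ] at this
  exact ENNReal.eq_sub_of_add_eq' one_ne_top (by rwa [add_comm] at this)

lemma measure_fst_sub_le (z : α × α) (s : Set β) : K z.1 s - K z.2 s ≤ 1 - overlap K z :=
  excess_prodMkRight_apply_univ K z ▸
    measure_sub_measure_le_excess (prodMkRight α K) (prodMkLeft α K) z s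

lemma measure_snd_sub_le (z : α × α) (s : Set β) : K z.2 s - K z.1 s ≤ 1 - overlap K z :=
  excess_prodMkLeft_apply_univ K z ▸
    measure_sub_measure_le_excess (prodMkLeft α K) (prodMkRight α K) z s

end Overlap

section Composition

variable {γ : Type*} [MeasurableSpace γ] [MeasurableSpace.CountablyGenerated γ]
  (K : Kernel α β) [IsFiniteKernel K] (L : Kernel β γ) [IsMarkovKernel L]

/- The measure `c • L ∘ₘ ν + pairCommon L ∘ₘ (R₁ ⊗ R₂)` lies below both `c • (L ∘ₖ K) z.1` and
`c • (L ∘ₖ K) z.2`: the shared part `ν` moves as a single chain, the remainders independently. -/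
lemma smul_add_lintegral_overlap_le {z : α × α} {ν R₁ R₂ : Measure β} [SFinite R₂] {c : ℝ≥0∞}
    (h₁ : K z.1 = ν + R₁) (h₂ : K z.2 = ν + R₂) (hc₁ : R₁ univ ≤ c) (hc₂ : R₂ univ ≤ c) :
    c * ν univ + ∫⁻ w, overlap L w ∂(R₁.prod R₂) ≤ c * overlap (L ∘ₖ K) z := by
  have hfst : c • L ∘ₘ ν + pairCommon L ∘ₘ (R₁.prod R₂) ≤ c • (L ∘ₖ K) z.1 := by
    rw [comp_apply, h₁, Measure.comp_add, smul_add]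
    exact add_le_add le_rfl ((pairCommon_comp_prod_le_fst L R₁ R₂).trans (by gcongr))
  have hsnd : c • L ∘ₘ ν + pairCommon L ∘ₘ (R₁.prod R₂) ≤ c • (L ∘ₖ K) z.2 := by
    rw [comp_apply, h₂, Measure.comp_add, smul_add]
    exact add_le_add le_rfl ((pairCommon_comp_prod_le_snd L R₁ R₂).trans (by gcongr))
  refine le_trans (le_of_eq ?_) (le_smul_overlap (L ∘ₖ K) hfst hsnd)
  rw [Measure.add_apply, Measure.smul_apply, Measure.comp_apply_univ, smul_eq_mul,
    Measure.bind_apply .univ (Kernel.aemeasurable _)]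
  rfl

variable [IsMarkovKernel K]

lemma lintegral_overlap_prod_le (z : α × α) :
    ∫⁻ w, overlap L w ∂((K z.1).prod (K z.2)) ≤ overlap (L ∘ₖ K) z := by
  have h := smul_add_lintegral_overlap_le K L (zero_add (K z.1)).symm (zero_add (K z.2)).symm
    measure_univ.le measure_univ.le
  rwa [one_mul, one_mul, Measure.coe_zero, Pi.zero_apply, zero_add] at h

variable [MeasurableSpace.CountablyGenerated β]

lemma overlap_le_overlap_comp (z : α × α) : overlap K z ≤ overlap (L ∘ₖ K) z := by
  have h := smul_add_lintegral_overlap_le K L (fst_eq_pairCommon_add K z)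
    (snd_eq_pairCommon_add K z) ((excess_prodMkRight_apply_univ K z).trans_le tsub_le_self)
    ((excess_prodMkLeft_apply_univ K z).trans_le tsub_le_self)
  rw [one_mul, one_mul] at h
  exact le_self_add.trans h

lemma one_sub_overlap_mul_add_lintegral_le (z : α × α) :
    (1 - overlap K z) * overlap K z + ∫⁻ w, overlap L w
        ∂((excess (prodMkRight α K) (prodMkLeft α K) z).prod
          (excess (prodMkLeft α K) (prodMkRight α K) z))
      ≤ (1 - overlap K z) * overlap (L ∘ₖ K) z :=
  smul_add_lintegral_overlap_le K L (fst_eq_pairCommon_add K z) (snd_eq_pairCommon_add K z)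
    (excess_prodMkRight_apply_univ K z).le (excess_prodMkLeft_apply_univ K z).le

end Composition

lemma tvDist_le_lintegral_overlap [MeasurableSpace.CountablyGenerated β] {μ : Measure β}
    [IsProbabilityMeasure μ] (K : Kernel β β) [IsMarkovKernel K] (hμ : K ∘ₘ μ = μ) (x : β) :
    tvDist (K x) μ ≤ 2 * ∫⁻ y, (1 - overlap K (x, y)) ∂μ := by
  refine mul_le_mul_right (iSup₂_le fun s hs ↦ ?_) 2
  have hμs : μ s = ∫⁻ y, K y s ∂μ := by
    conv_lhs => rw [← hμ]
    exact Measure.bind_apply hs K.aemeasurable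
  have hKs : K x s = ∫⁻ _, K x s ∂μ := by rw [MeasureTheory.lintegral_const, measure_univ, mul_one]
  rw [hμs, hKs]
  exact max_le
    ((lintegral_sub_le _ _ (K.measurable_coe hs)).trans
      (lintegral_mono fun y ↦ measure_fst_sub_le K (x, y) s))
    ((lintegral_sub_le _ _ measurable_const).trans
      (lintegral_mono fun y ↦ measure_snd_sub_le K (x, y) s))

end ProbabilityTheory.Kernel

section MarkovChain

open Kernel

variable {E : Type*} [MeasurableSpace E] (P : Kernel E E)

instance instIsMarkovKernelNStep [IsMarkovKernel P] : ∀ n, IsMarkovKernel (nStep P n)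
  | 0 => by rw [nStep]; infer_instance
  | n + 1 => by have := instIsMarkovKernelNStep n; rw [nStep]; infer_instance

lemma nStep_add (m n : ℕ) : nStep P (m + n) = nStep P m ∘ₖ nStep P n := by
  induction n with
  | zero => rw [add_zero, nStep, Kernel.comp_id]
  | succ n ih => rw [← add_assoc, nStep, nStep, ih, Kernel.comp_assoc]

lemma nStep_comp_eq_self {μ : Measure E} (hμ : P ∘ₘ μ = μ) (n : ℕ) : nStep P n ∘ₘ μ = μ := by
  induction n with
  | zero => rw [nStep, Measure.id_comp]
  | succ n ih => rw [nStep, ← Measure.comp_assoc, hμ, ih]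

variable [IsMarkovKernel P] [MeasurableSpace.CountablyGenerated E]

noncomputable def limOverlap (z : E × E) : ℝ≥0∞ := ⨆ n, overlap (nStep P n) z

lemma monotone_overlap_nStep (z : E × E) : Monotone fun n ↦ overlap (nStep P n) z := by
  intro n n' hn
  obtain ⟨k, rfl⟩ := Nat.exists_eq_add_of_le' hn
  simpa only [nStep_add] using overlap_le_overlap_comp (nStep P n) (nStep P k) z

lemma measurable_limOverlap : Measurable (limOverlap P) :=
  .iSup fun n ↦ measurable_overlap (nStep P n)

lemma limOverlap_le_one (z : E × E) : limOverlap P z ≤ 1 :=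
  iSup_le fun n ↦ overlap_le_one (nStep P n) z

lemma overlap_comp_le_limOverlap (k n : ℕ) (z : E × E) :
    overlap (nStep P k ∘ₖ nStep P n) z ≤ limOverlap P z := by
  simpa only [limOverlap, nStep_add] using le_iSup (fun j ↦ overlap (nStep P j) z) (k + n)

lemma lintegral_limOverlap (ρ : Measure (E × E)) :
    ∫⁻ w, limOverlap P w ∂ρ = ⨆ k, ∫⁻ w, overlap (nStep P k) w ∂ρ :=
  lintegral_iSup (fun _ ↦ measurable_overlap _) fun _ _ h w ↦ monotone_overlap_nStep P w h

lemma lintegral_limOverlap_le (n : ℕ) (z : E × E) :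
    ∫⁻ w, limOverlap P w ∂((nStep P n ∥ₖ nStep P n) z) ≤ limOverlap P z := by
  rw [lintegral_limOverlap, Kernel.parallelComp_apply]
  refine iSup_le fun k ↦ ?_
  exact (lintegral_overlap_prod_le (nStep P n) (nStep P k) z).trans
    (overlap_comp_le_limOverlap P k n z)

lemma one_sub_overlap_mul_add_lintegral_limOverlap_le (n : ℕ) (z : E × E) :
    (1 - overlap (nStep P n) z) * overlap (nStep P n) z + ∫⁻ w, limOverlap P w
        ∂((excess (prodMkRight E (nStep P n)) (prodMkLeft E (nStep P n)) z).prod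
          (excess (prodMkLeft E (nStep P n)) (prodMkRight E (nStep P n)) z))
      ≤ (1 - overlap (nStep P n) z) * limOverlap P z := by
  rw [lintegral_limOverlap, ENNReal.add_iSup]
  refine iSup_le fun k ↦ (one_sub_overlap_mul_add_lintegral_le (nStep P n) (nStep P k) z).trans ?_
  gcongr
  exact overlap_comp_le_limOverlap P k n z

lemma ae_ae_limOverlap_eq {μ : Measure E} [IsProbabilityMeasure μ] (hμ : P ∘ₘ μ = μ) (n : ℕ) :
    ∀ᵐ z ∂(μ.prod μ), ∀ᵐ w ∂((nStep P n ∥ₖ nStep P n) z), limOverlap P w = limOverlap P z := by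
  have hQ : (nStep P n ∥ₖ nStep P n) ∘ₘ (μ.prod μ) = μ.prod μ := by
    rw [Measure.parallelComp_comp_prod, nStep_comp_eq_self P hμ]
  have hsub (z : E × E) :
      1 - limOverlap P z ≤ ∫⁻ w, 1 - limOverlap P w ∂((nStep P n ∥ₖ nStep P n) z) := by
    rw [lintegral_sub (measurable_limOverlap P) ((lintegral_limOverlap_le P n z).trans_lt
      ((limOverlap_le_one P z).trans_lt one_lt_top)).ne (ae_of_all _ (limOverlap_le_one P)),
      MeasureTheory.lintegral_const, measure_univ, mul_one]
    exact tsub_le_tsub_left (lintegral_limOverlap_le P n z) 1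
  have hsq : ∫⁻ z, (1 - limOverlap P z) ^ 2 ∂(μ.prod μ) ≠ ∞ :=
    ne_top_of_le_ne_top (measure_ne_top (μ.prod μ) univ)
      ((lintegral_mono fun z ↦ pow_le_one₀ zero_le tsub_le_self).trans_eq lintegral_one)
  filter_upwards [ae_ae_eq_of_le_lintegral hQ (measurable_const.sub (measurable_limOverlap P))
    (fun z ↦ sub_ne_top one_ne_top) hsq hsub] with z hz
  filter_upwards [hz] with w hw
  exact (ENNReal.sub_right_inj one_ne_top (limOverlap_le_one P w) (limOverlap_le_one P z)).1 hw

lemma ae_overlap_eq_zero_or_limOverlap_eq_one {μ : Measure E} [IsProbabilityMeasure μ]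
    (hμ : P ∘ₘ μ = μ) :
    ∀ᵐ z ∂(μ.prod μ), ∀ n, overlap (nStep P n) z = 0 ∨ limOverlap P z = 1 := by
  rw [ae_all_iff]
  intro n
  filter_upwards [ae_ae_limOverlap_eq P hμ n] with z hz
  set K := nStep P n
  set R₁ := excess (prodMkRight E K) (prodMkLeft E K) z
  set R₂ := excess (prodMkLeft E K) (prodMkRight E K) z
  have hR : R₁.prod R₂ ≤ (K ∥ₖ K) z := by
    rw [parallelComp_apply]
    exact Measure.prod_mono (excess_le _ _ z) (excess_le _ _ z)
  have hint : ∫⁻ w, limOverlap P w ∂(R₁.prod R₂) = limOverlap P z * (1 - overlap K z) ^ 2 := by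
    rw [lintegral_congr_ae ((Measure.absolutelyContinuous_of_le hR).ae_le hz),
      MeasureTheory.lintegral_const, ← univ_prod_univ, Measure.prod_prod,
      excess_prodMkRight_apply_univ, excess_prodMkLeft_apply_univ, sq]
  have H := one_sub_overlap_mul_add_lintegral_limOverlap_le P n z
  rw [hint] at H
  exact ENNReal.eq_zero_or_eq_one_of_mul_le (le_iSup (fun j ↦ overlap (nStep P j) z) n)
    (limOverlap_le_one P z) H

lemma tendsto_tvDist_nStep {μ : Measure E} [IsProbabilityMeasure μ] (hμ : P ∘ₘ μ = μ) {x : E}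
    (hx : ∀ᵐ y ∂μ, limOverlap P (x, y) = 1) :
    Tendsto (fun n ↦ tvDist (nStep P n x) μ) atTop (𝓝 0) := by
  have hlim : Tendsto (fun n ↦ ∫⁻ y, 1 - overlap (nStep P n) (x, y) ∂μ) atTop (𝓝 0) := by
    have h := tendsto_lintegral_of_dominated_convergence (μ := μ)
      (F := fun n y ↦ 1 - overlap (nStep P n) (x, y)) (f := 0) (fun _ ↦ 1)
      (fun n ↦ measurable_const.sub ((measurable_overlap (nStep P n)).comp measurable_prodMk_left))
      (fun n ↦ ae_of_all _ fun y ↦ tsub_le_self) (by simp) (hx.mono fun y hy ↦ ?_)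
    · simpa using h
    have h1 : Tendsto (fun n ↦ overlap (nStep P n) (x, y)) atTop (𝓝 1) :=
      hy ▸ tendsto_atTop_iSup (monotone_overlap_nStep P (x, y))
    simpa using ENNReal.Tendsto.sub tendsto_const_nhds h1 (.inl one_ne_top)
  have h2 := ENNReal.Tendsto.const_mul hlim (.inr ofNat_ne_top) (a := 2)
  rw [mul_zero] at h2
  exact tendsto_of_tendsto_of_tendsto_of_le_of_le tendsto_const_nhds h2 (fun _ ↦ zero_le)
    fun n ↦ tvDist_le_lintegral_overlap _ (nStep_comp_eq_self P hμ n) x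

end MarkovChain

theorem doob_nonsingular_ae_general
    {E : Type*} [MeasurableSpace E] [MeasurableSpace.CountablyGenerated E]
    (P : ProbabilityTheory.Kernel E E) [IsMarkovKernel P]
    (μ : Measure E) [IsProbabilityMeasure μ]
    (hinv : ∀ A : Set E, MeasurableSet A → μ A = ∫⁻ x, P x A ∂μ)
    (hns : ∀ᵐ p ∂(μ.prod μ), ∃ n : ℕ, ¬ nStep P n p.1 ⟂ₘ nStep P n p.2) :
    ∀ᵐ x ∂μ, Tendsto (fun n => tvDist (nStep P n x) μ) atTop (nhds 0) := by
  have hμ : P ∘ₘ μ = μ :=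
    Measure.ext fun s hs ↦ by rw [Measure.bind_apply hs P.aemeasurable, hinv s hs]
  have hlim : ∀ᵐ z ∂(μ.prod μ), limOverlap P z = 1 := by
    filter_upwards [ae_overlap_eq_zero_or_limOverlap_eq_one P hμ, hns] with z hz ⟨n, hn⟩
    exact (hz n).resolve_left fun h ↦ hn (Kernel.mutuallySingular_of_overlap_eq_zero _ h)
  filter_upwards [Measure.ae_ae_of_ae_prod hlim] with x hx
  exact tendsto_tvDist_nStep P hμ hx

/-- **Theorem 2.** If `μ` is an invariant probability measure and for `μ ⊗ μ`-a.a. `(x,y)`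
there is `n` with `P_n(x,·)` and `P_n(y,·)` not mutually singular, then
`‖P_n(x,·) - μ‖ → 0` for `μ`-a.a. `x`. -/
theorem doob_nonsingular_ae
    {E : Type*} [MeasurableSpace E] [MeasurableSpace.CountablyGenerated E]
    (hΔ : MeasurableSet {p : E × E | p.1 = p.2})
    (P : ProbabilityTheory.Kernel E E) [IsMarkovKernel P]
    (μ : Measure E) [IsProbabilityMeasure μ]
    (hinv : ∀ A : Set E, MeasurableSet A → μ A = ∫⁻ x, P x A ∂μ)
    (hns : ∀ᵐ p ∂(μ.prod μ), ∃ n : ℕ, ¬ nStep P n p.1 ⟂ₘ nStep P n p.2) :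
    ∀ᵐ x ∂μ, Tendsto (fun n => tvDist (nStep P n x) μ) atTop (nhds 0) :=
  doob_nonsingular_ae_general P μ hinv hns
end

section
/- Let (E, 𝓔) be a countably generated measurable space and let P(x, dy) be a Markov kernel on (E, 𝓔). Define the kernel Λ(x₁, x₂; dy) = (1/2)(P(x₁, dy) + P(x₂, dy)) on E × E. Then there exist jointly measurable functions f₁, f₂ : E × E × E → [0, ∞) such that for all x₁, x₂ ∈ E and all A ∈ 𝓔, P(xᵢ, A) = ∫_A fᵢ(x₁, x₂, y) Λ(x₁, x₂; dy) for i = 1, 2; that is, the Radon–Nikodym derivatives of P(xᵢ, ·) with respect to Λ(x₁, x₂; ·) can be chosen jointly measurably in (x₁, x₂, y). -/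
/-! `Kernel.rnDeriv` chooses Radon–Nikodym derivatives measurably in the parameter of the
kernels. Applied to the kernels `(x₁, x₂) ↦ P xᵢ` against their sum it gives the densities with
respect to `P x₁ + P x₂`; doubling them converts to densities with respect to the average `Λ`. -/

open MeasureTheory ProbabilityTheory ENNReal

lemma MeasureTheory.setLIntegral_const_mul_inv_smul_measure {α : Type*} [MeasurableSpace α]
    {c : ℝ≥0∞} (hc₀ : c ≠ 0) (hc : c ≠ ∞) (μ : Measure α) {f : α → ℝ≥0∞}
    (hf : Measurable f) (s : Set α) :
    ∫⁻ x in s, c * f x ∂(c⁻¹ • μ) = ∫⁻ x in s, f x ∂μ := by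
  rw [Measure.restrict_smul, lintegral_smul_measure, lintegral_const_mul _ hf, smul_eq_mul,
    ← mul_assoc, ENNReal.inv_mul_cancel hc₀ hc, one_mul]

namespace ProbabilityTheory.Kernel

lemma measurable_rnDeriv_uncurry {α β γ : Type*} {_ : MeasurableSpace α} {_ : MeasurableSpace β}
    {_ : MeasurableSpace γ} [MeasurableSpace.CountableOrCountablyGenerated (α × β) γ]
    (κ η : Kernel (α × β) γ) :
    Measurable fun p : α × β × γ ↦ κ.rnDeriv η (p.1, p.2.1) p.2.2 :=
  (measurable_rnDeriv κ η).comp MeasurableEquiv.prodAssoc.symm.measurable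

variable {α γ : Type*} {mα : MeasurableSpace α} {mγ : MeasurableSpace γ}
  [MeasurableSpace.CountableOrCountablyGenerated α γ]
  {κ η : Kernel α γ} [IsFiniteKernel κ] [IsFiniteKernel η]

lemma setLIntegral_rnDeriv_add_left (a : α) {s : Set γ} (hs : MeasurableSet s) :
    ∫⁻ c in s, κ.rnDeriv (κ + η) a c ∂(κ a + η a) = κ a s :=
  setLIntegral_rnDeriv (η := κ + η) (Measure.AbsolutelyContinuous.rfl.add_right (η a)) hs

lemma setLIntegral_rnDeriv_add_right (a : α) {s : Set γ} (hs : MeasurableSet s) :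
    ∫⁻ c in s, η.rnDeriv (κ + η) a c ∂(κ a + η a) = η a s :=
  setLIntegral_rnDeriv (η := κ + η) (Measure.AbsolutelyContinuous.rfl.add_right' (κ a)) hs

end ProbabilityTheory.Kernel

open ProbabilityTheory.Kernel in
/-- **Jointly measurable Radon–Nikodym derivatives.** For a Markov kernel `P` on a countably
generated measurable space, setting `Λ(x₁,x₂;·) = (1/2)(P(x₁,·) + P(x₂,·))`, the
Radon–Nikodym derivatives of `P(xᵢ,·)` w.r.t. `Λ(x₁,x₂;·)` can be chosen jointly measurably:
there are measurable `f₁ f₂ : E × E × E → [0,∞]` with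
`P(xᵢ, A) = ∫_A fᵢ(x₁,x₂,y) Λ(x₁,x₂; dy)` for all `x₁, x₂, A` and `i = 1, 2`. -/
theorem jointly_measurable_rn_derivatives
    {E : Type*} [MeasurableSpace E] [MeasurableSpace.CountablyGenerated E]
    (P : ProbabilityTheory.Kernel E E) [IsMarkovKernel P] :
    ∃ f₁ f₂ : E × E × E → ℝ≥0∞, Measurable f₁ ∧ Measurable f₂ ∧
      ∀ x₁ x₂ : E, ∀ A : Set E, MeasurableSet A →
        (P x₁ A =
          ∫⁻ y in A, f₁ (x₁, x₂, y)
            ∂((1 / 2 : ℝ≥0∞) • P x₁ + (1 / 2 : ℝ≥0∞) • P x₂) ∧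
         P x₂ A =
          ∫⁻ y in A, f₂ (x₁, x₂, y)
            ∂((1 / 2 : ℝ≥0∞) • P x₁ + (1 / 2 : ℝ≥0∞) • P x₂)) := by
  set κ₁ := P.comap Prod.fst measurable_fst
  set κ₂ := P.comap Prod.snd measurable_snd
  refine ⟨fun p ↦ 2 * κ₁.rnDeriv (κ₁ + κ₂) (p.1, p.2.1) p.2.2,
    fun p ↦ 2 * κ₂.rnDeriv (κ₁ + κ₂) (p.1, p.2.1) p.2.2,
    (measurable_rnDeriv_uncurry _ _).const_mul 2, (measurable_rnDeriv_uncurry _ _).const_mul 2,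
    fun x₁ x₂ A hA ↦ ?_⟩
  simp only [one_div, ← smul_add]
  rw [setLIntegral_const_mul_inv_smul_measure two_ne_zero ofNat_ne_top _
      (measurable_rnDeriv_right _ _ _),
    setLIntegral_const_mul_inv_smul_measure two_ne_zero ofNat_ne_top _
      (measurable_rnDeriv_right _ _ _)]
  exact ⟨(setLIntegral_rnDeriv_add_left (κ := κ₁) (η := κ₂) (x₁, x₂) hA).symm,
    (setLIntegral_rnDeriv_add_right (κ := κ₁) (η := κ₂) (x₁, x₂) hA).symm⟩
end

section
/- (Continuous-time Doob theorem.) Let (P_t)_{t ≥ 0} be a family of Markov kernels on (E, 𝓔) satisfying the semigroup property P_{s+t}(x, A) = ∫_E P_t(y, A) P_s(x, dy) for all s, t ≥ 0, with P_0(x, ·) = δ_x (no regularity in t is required). Assume that for each pair x, y ∈ E there exists t = t_{x,y} > 0 such that P_t(x,·) and P_t(y,·) are mutually absolutely continuous (equivalent). Then there is at most one probability measure μ with μ(A) = ∫_E P_t(x, A) μ(dx) for all t ≥ 0 and A ∈ 𝓔, and if such a μ exists, then for every x ∈ E, ‖P_t(x,·) − μ‖ → 0 as t → ∞. -/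
/-!
For `p = (x, y)` let `D_t(p) = ‖P_t(x,·) - P_t(y,·)‖ / 2`; it decreases in `t` to some `c(p)`.
Coupling `P_s(x,·)` and `P_s(y,·)` independently gives `D_{s+t}(p) ≤ ∫ D_t d(P_s(x,·) ⊗ P_s(y,·))`,
so `c` is subharmonic for the product chain, which preserves `μ ⊗ μ`. Hence `c` is almost surely
constant along the product chain, and by the equivalence hypothesis `c = a` holds `μ ⊗ μ`-almost
everywhere. For a typical `(x, y)` and large `m`, the measures `P_m(x,·)` and `P_m(y,·)` are
equivalent and absolutely continuous with respect to `μ`; a maximal coupling of them charges the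
diagonal, where `c` vanishes, and this gives `a ≤ a θ` with `θ < 1`, so `a = 0`. Integrating
`c = 0` against `P_M(x,·) ⊗ μ` shows `‖P_t(x,·) - μ‖ → 0`, and uniqueness follows.
-/

open MeasureTheory ProbabilityTheory Filter ENNReal NNReal Set

section HalfTvDist

variable {E : Type*} [MeasurableSpace E] {μ ν ξ : Measure E}

noncomputable def halfTvDist (μ ν : Measure E) : ℝ≥0∞ :=
  ⨆ (A : Set E) (_ : MeasurableSet A), ((μ A - ν A) ⊔ (ν A - μ A))

lemma tvDist_eq_two_mul_halfTvDist : tvDist μ ν = 2 * halfTvDist μ ν := rfl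

lemma halfTvDist_comm (μ ν : Measure E) : halfTvDist μ ν = halfTvDist ν μ := by
  simp only [halfTvDist, sup_comm]

lemma apply_le_add_halfTvDist {A : Set E} (hA : MeasurableSet A) :
    μ A ≤ ν A + halfTvDist μ ν :=
  tsub_le_iff_left.mp <| le_sup_left.trans <| le_iSup₂_of_le A hA le_rfl

lemma halfTvDist_le {r : ℝ≥0∞}
    (h : ∀ A, MeasurableSet A → μ A ≤ ν A + r ∧ ν A ≤ μ A + r) : halfTvDist μ ν ≤ r :=
  iSup₂_le fun A hA => sup_le (tsub_le_iff_left.mpr (h A hA).1) (tsub_le_iff_left.mpr (h A hA).2)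

lemma halfTvDist_le_of_forall_le_add [IsFiniteMeasure μ] (hmass : μ univ = ν univ) {r : ℝ≥0∞}
    (h : ∀ A, MeasurableSet A → ν A ≤ μ A + r) : halfTvDist μ ν ≤ r := by
  refine halfTvDist_le fun A hA => ⟨?_, h A hA⟩
  refine (ENNReal.add_le_add_iff_right (measure_ne_top μ Aᶜ)).mp ?_
  calc μ A + μ Aᶜ = ν A + ν Aᶜ := by
        rw [measure_add_measure_compl hA, measure_add_measure_compl hA, hmass]
    _ ≤ ν A + (μ Aᶜ + r) := by gcongr; exact h _ hA.compl
    _ = ν A + r + μ Aᶜ := by ring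

lemma halfTvDist_self (μ : Measure E) : halfTvDist μ μ = 0 :=
  nonpos_iff_eq_zero.mp <| halfTvDist_le fun _ _ => by simp

lemma halfTvDist_triangle (μ ν ξ : Measure E) :
    halfTvDist μ ξ ≤ halfTvDist μ ν + halfTvDist ν ξ := by
  refine halfTvDist_le fun A hA => ⟨?_, ?_⟩
  · calc μ A ≤ ν A + halfTvDist μ ν := apply_le_add_halfTvDist hA
      _ ≤ ξ A + halfTvDist ν ξ + halfTvDist μ ν := by gcongr; exact apply_le_add_halfTvDist hA
      _ = ξ A + (halfTvDist μ ν + halfTvDist ν ξ) := by ring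
  · calc ξ A ≤ ν A + halfTvDist ν ξ := by
          rw [halfTvDist_comm]; exact apply_le_add_halfTvDist hA
      _ ≤ μ A + halfTvDist μ ν + halfTvDist ν ξ := by
          gcongr; rw [halfTvDist_comm]; exact apply_le_add_halfTvDist hA
      _ = μ A + (halfTvDist μ ν + halfTvDist ν ξ) := by ring

lemma eq_of_halfTvDist_eq_zero (h : halfTvDist μ ν = 0) : μ = ν := by
  ext A hA
  refine le_antisymm ?_ ?_
  · simpa [h] using apply_le_add_halfTvDist (μ := μ) (ν := ν) hA
  · simpa [halfTvDist_comm, h] using apply_le_add_halfTvDist (μ := ν) (ν := μ) hA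

lemma halfTvDist_le_one [IsProbabilityMeasure μ] [IsProbabilityMeasure ν] :
    halfTvDist μ ν ≤ 1 :=
  halfTvDist_le fun _ _ => ⟨prob_le_one.trans le_add_self, prob_le_one.trans le_add_self⟩

lemma eq_of_tendsto_halfTvDist {ι : Type*} {l : Filter ι} [l.NeBot] {ν : ι → Measure E}
    (h₁ : Tendsto (fun i => halfTvDist (ν i) μ) l (nhds 0))
    (h₂ : Tendsto (fun i => halfTvDist (ν i) ξ) l (nhds 0)) : μ = ξ := by
  refine eq_of_halfTvDist_eq_zero <| nonpos_iff_eq_zero.mp <|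
    ge_of_tendsto' (by simpa using h₁.add h₂) fun i => ?_
  rw [halfTvDist_comm (ν i)]
  exact halfTvDist_triangle μ (ν i) ξ

end HalfTvDist

section Formula

variable {E : Type*} [MeasurableSpace E]

lemma le_add_lintegral_one_sub_rnDeriv (μ ν : Measure E) (A : Set E) :
    ν A ≤ μ A + ∫⁻ x, 1 - μ.rnDeriv ν x ∂ν :=
  calc ν A = ∫⁻ _ in A, 1 ∂ν := (setLIntegral_one A).symm
    _ ≤ ∫⁻ x in A, ((1 - μ.rnDeriv ν x) + μ.rnDeriv ν x) ∂ν := lintegral_mono fun _ => le_tsub_add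
    _ = ∫⁻ x in A, 1 - μ.rnDeriv ν x ∂ν + ∫⁻ x in A, μ.rnDeriv ν x ∂ν :=
        lintegral_add_right _ (Measure.measurable_rnDeriv μ ν)
    _ ≤ ∫⁻ x, 1 - μ.rnDeriv ν x ∂ν + μ A :=
        add_le_add (setLIntegral_le_lintegral _ _) (Measure.setLIntegral_rnDeriv_le A)
    _ = μ A + ∫⁻ x, 1 - μ.rnDeriv ν x ∂ν := add_comm _ _

lemma exists_add_lintegral_one_sub_rnDeriv_eq (μ ν : Measure E) [μ.HaveLebesgueDecomposition ν] :
    ∃ A, MeasurableSet A ∧ μ A + ∫⁻ x, 1 - μ.rnDeriv ν x ∂ν = ν A := by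
  obtain ⟨S, hS, hsS, hνS⟩ := Measure.mutuallySingular_singularPart μ ν
  set f := μ.rnDeriv ν
  set A := {x | f x < 1} ∩ S
  have hA : MeasurableSet A :=
    (measurableSet_lt (Measure.measurable_rnDeriv μ ν) measurable_const).inter hS
  have hμA : μ A = ∫⁻ x in A, f x ∂ν := by
    conv_lhs => rw [← Measure.singularPart_add_rnDeriv μ ν]
    rw [Measure.add_apply, withDensity_apply _ hA, measure_mono_null inter_subset_right hsS,
      zero_add]
  have hint : ∫⁻ x, 1 - f x ∂ν = ∫⁻ x in A, 1 - f x ∂ν := by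
    rw [← lintegral_indicator hA]
    refine lintegral_congr_ae ?_
    filter_upwards [measure_eq_zero_iff_ae_notMem.mp hνS] with x hx
    by_cases hf : f x < 1
    · rw [indicator_of_mem (show x ∈ A from ⟨hf, not_not.mp hx⟩)]
    · rw [indicator_of_notMem (fun h => hf h.1), tsub_eq_zero_of_le (not_lt.mp hf)]
  refine ⟨A, hA, ?_⟩
  rw [hμA, hint, ← lintegral_add_left (Measure.measurable_rnDeriv μ ν),
    setLIntegral_congr_fun hA (fun x hx => add_tsub_cancel_of_le hx.1.le), setLIntegral_one]

lemma halfTvDist_eq_lintegral_one_sub_rnDeriv {μ ν : Measure E} [IsFiniteMeasure μ]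
    [IsFiniteMeasure ν] (hmass : μ univ = ν univ) :
    halfTvDist μ ν = ∫⁻ x, 1 - μ.rnDeriv ν x ∂ν := by
  refine le_antisymm ?_ ?_
  · exact halfTvDist_le_of_forall_le_add hmass fun A _ => le_add_lintegral_one_sub_rnDeriv μ ν A
  · obtain ⟨A, hA, hAeq⟩ := exists_add_lintegral_one_sub_rnDeriv_eq μ ν
    refine (ENNReal.add_le_add_iff_left (measure_ne_top μ A)).mp ?_
    rw [hAeq, halfTvDist_comm]
    exact apply_le_add_halfTvDist hA

lemma measurable_halfTvDist_kernel {α : Type*} [MeasurableSpace α]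
    [MeasurableSpace.CountableOrCountablyGenerated α E] (κ η : Kernel α E) [IsMarkovKernel κ]
    [IsMarkovKernel η] : Measurable fun a => halfTvDist (κ a) (η a) := by
  have h : (fun a => halfTvDist (κ a) (η a)) = fun a => ∫⁻ y, 1 - κ.rnDeriv η a y ∂η a := by
    ext a
    rw [halfTvDist_eq_lintegral_one_sub_rnDeriv (by simp)]
    exact lintegral_congr_ae <|
      (Kernel.rnDeriv_eq_rnDeriv_measure (κ := κ)).mono fun y hy => by simp only [hy]
  rw [h]
  exact (measurable_const.sub (Kernel.measurable_rnDeriv κ η)).lintegral_kernel_prod_right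

end Formula

section Coupling

variable {E F : Type*} [MeasurableSpace E] [MeasurableSpace F]

lemma comp_map_apply_le_add_lintegral (κ : Kernel E F) (π : Measure (E × E)) {f g : E × E → E}
    (hf : Measurable f) (hg : Measurable g) {A : Set F} (hA : MeasurableSet A) :
    (κ ∘ₘ π.map f) A ≤ (κ ∘ₘ π.map g) A + ∫⁻ p, halfTvDist (κ (f p)) (κ (g p)) ∂π := by
  rw [Measure.bind_apply hA κ.aemeasurable, Measure.bind_apply hA κ.aemeasurable,
    lintegral_map (κ.measurable_coe hA) hf, lintegral_map (κ.measurable_coe hA) hg]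
  exact (lintegral_mono fun p => apply_le_add_halfTvDist hA).trans_eq
    (lintegral_add_left ((κ.measurable_coe hA).comp hg) _)

lemma halfTvDist_comp_le_lintegral (κ : Kernel E F) {α β : Measure E} {π : Measure (E × E)}
    (h₁ : π.map Prod.fst = α) (h₂ : π.map Prod.snd = β) :
    halfTvDist (κ ∘ₘ α) (κ ∘ₘ β) ≤ ∫⁻ p, halfTvDist (κ p.1) (κ p.2) ∂π := by
  subst h₁ h₂
  refine halfTvDist_le fun A hA =>
    ⟨comp_map_apply_le_add_lintegral κ π measurable_fst measurable_snd hA, ?_⟩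
  simpa only [halfTvDist_comm] using
    comp_map_apply_le_add_lintegral κ π measurable_snd measurable_fst hA

lemma halfTvDist_comp_le_lintegral_prod (κ : Kernel E F) (α β : Measure E)
    [IsProbabilityMeasure α] [IsProbabilityMeasure β] :
    halfTvDist (κ ∘ₘ α) (κ ∘ₘ β) ≤ ∫⁻ p, halfTvDist (κ p.1) (κ p.2) ∂α.prod β :=
  halfTvDist_comp_le_lintegral κ (by simp [Measure.map_fst_prod])
    (by simp [Measure.map_snd_prod])

/-- `ρ` is the product of `α - γ` and `β - γ`, normalized by their common mass. -/
lemma exists_coupling_of_le {α β γ : Measure E} [IsFiniteMeasure α] [IsFiniteMeasure β]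
    (hγα : γ ≤ α) (hγβ : γ ≤ β) (hmass : α univ = β univ) :
    ∃ ρ : Measure (E × E), ρ ≪ α.prod β ∧ ρ univ = α univ - γ univ ∧
      (γ.map (fun x => (x, x)) + ρ).map Prod.fst = α ∧
      (γ.map (fun x => (x, x)) + ρ).map Prod.snd = β := by
  have : IsFiniteMeasure γ := isFiniteMeasure_of_le α hγα
  set m := α univ - γ univ
  have hα : (α - γ) univ = m := Measure.sub_apply .univ hγα
  have hβ : (β - γ) univ = m := by rw [Measure.sub_apply .univ hγβ, ← hmass]
  have hm : m ≠ ∞ := (measure_ne_top (α - γ) univ) ∘ hα.trans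
  have hcancel : ∀ μ : Measure E, μ univ = m → m⁻¹ • m • μ = μ := by
    intro μ hμ
    by_cases hm0 : m = 0
    · rw [Measure.measure_univ_eq_zero.mp (hμ.trans hm0), smul_zero, smul_zero]
    · rw [smul_smul, ENNReal.inv_mul_cancel hm0 hm, one_smul]
  have hdiag : Measurable fun x : E => (x, x) := measurable_id.prodMk measurable_id
  refine ⟨m⁻¹ • (α - γ).prod (β - γ), ?_, ?_, ?_, ?_⟩
  · exact Measure.smul_absolutelyContinuous.trans <|
      (Measure.absolutelyContinuous_of_le Measure.sub_le).prod
        (Measure.absolutelyContinuous_of_le Measure.sub_le)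
  · by_cases hm0 : m = 0
    · simp [← univ_prod_univ, Measure.prod_prod, hα, hm0]
    · rw [Measure.smul_apply, ← univ_prod_univ, Measure.prod_prod, hα, hβ, smul_eq_mul,
        ← mul_assoc, ENNReal.inv_mul_cancel hm0 hm, one_mul]
  · rw [Measure.map_add _ _ measurable_fst, Measure.map_map measurable_fst hdiag,
      Measure.map_smul, Measure.map_fst_prod, hβ, hcancel _ hα, add_comm]
    rw [show (Prod.fst ∘ fun x : E => (x, x)) = id from rfl, Measure.map_id]
    exact Measure.sub_add_cancel_of_le hγα
  · rw [Measure.map_add _ _ measurable_snd, Measure.map_map measurable_snd hdiag,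
      Measure.map_smul, Measure.map_snd_prod, hα, hcancel _ hβ, add_comm]
    rw [show (Prod.snd ∘ fun x : E => (x, x)) = id from rfl, Measure.map_id]
    exact Measure.sub_add_cancel_of_le hγβ

lemma lintegral_min_rnDeriv_one_add_halfTvDist (α β : Measure E) [IsProbabilityMeasure α]
    [IsProbabilityMeasure β] : ∫⁻ x, min (α.rnDeriv β x) 1 ∂β + halfTvDist α β = 1 := by
  rw [halfTvDist_eq_lintegral_one_sub_rnDeriv (by simp),
    ← lintegral_add_left ((Measure.measurable_rnDeriv α β).min measurable_const)]
  calc ∫⁻ x, min (α.rnDeriv β x) 1 + (1 - α.rnDeriv β x) ∂β = ∫⁻ _, 1 ∂β := by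
        congr with x
        rcases le_total (α.rnDeriv β x) 1 with h | h
        · rw [min_eq_left h, add_tsub_cancel_of_le h]
        · rw [min_eq_right h, tsub_eq_zero_of_le h, add_zero]
    _ = 1 := by simp

lemma halfTvDist_lt_one_of_absolutelyContinuous {α β : Measure E} [IsProbabilityMeasure α]
    [IsProbabilityMeasure β] (h : α ≪ β) : halfTvDist α β < 1 := by
  rw [← lintegral_min_rnDeriv_one_add_halfTvDist α β, add_comm]
  refine ENNReal.lt_add_right (halfTvDist_le_one.trans_lt one_lt_top).ne fun h0 => ?_
  have hf : α.rnDeriv β =ᵐ[β] 0 := by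
    filter_upwards [(lintegral_eq_zero_iff (by fun_prop)).mp h0] with x hx
    simpa using hx
  have hα := Measure.withDensity_rnDeriv_eq α β h
  rw [withDensity_congr_ae hf, withDensity_zero] at hα
  exact IsProbabilityMeasure.ne_zero α hα.symm

/-- `ρ` is the off-diagonal part of a maximal coupling of `α` and `β`. -/
lemma exists_measure_halfTvDist_comp_le (α β : Measure E) [IsProbabilityMeasure α]
    [IsProbabilityMeasure β] :
    ∃ ρ : Measure (E × E), ρ ≪ α.prod β ∧ ρ univ = halfTvDist α β ∧
      ∀ κ : Kernel E F, halfTvDist (κ ∘ₘ α) (κ ∘ₘ β) ≤ ∫⁻ p, halfTvDist (κ p.1) (κ p.2) ∂ρ := by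
  set γ := β.withDensity fun x => min (α.rnDeriv β x) 1
  have hγα : γ ≤ α := (withDensity_mono (ae_of_all _ fun _ => min_le_left _ _)).trans
    (Measure.withDensity_rnDeriv_le α β)
  have hγβ : γ ≤ β := (withDensity_mono (ae_of_all _ fun _ => min_le_right _ _)).trans_eq
    withDensity_one
  have hγ : γ univ + halfTvDist α β = 1 := by
    rw [withDensity_apply _ .univ, Measure.restrict_univ,
      lintegral_min_rnDeriv_one_add_halfTvDist]
  obtain ⟨ρ, hρ, hρuniv, h₁, h₂⟩ := exists_coupling_of_le hγα hγβ (by simp)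
  refine ⟨ρ, hρ, ?_, fun κ => ?_⟩
  · have : IsFiniteMeasure γ := isFiniteMeasure_of_le β hγβ
    rw [hρuniv, measure_univ, ← hγ, ENNReal.add_sub_cancel_left (measure_ne_top γ univ)]
  calc halfTvDist (κ ∘ₘ α) (κ ∘ₘ β)
      ≤ ∫⁻ p, halfTvDist (κ p.1) (κ p.2) ∂(γ.map (fun x => (x, x)) + ρ) :=
        halfTvDist_comp_le_lintegral κ h₁ h₂
    _ = ∫⁻ p, halfTvDist (κ p.1) (κ p.2) ∂γ.map (fun x => (x, x)) +
        ∫⁻ p, halfTvDist (κ p.1) (κ p.2) ∂ρ := lintegral_add_measure _ _ _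
    _ ≤ ∫⁻ x, halfTvDist (κ x) (κ x) ∂γ + ∫⁻ p, halfTvDist (κ p.1) (κ p.2) ∂ρ := by
        gcongr; exact lintegral_map_le _ _
    _ = ∫⁻ p, halfTvDist (κ p.1) (κ p.2) ∂ρ := by simp [halfTvDist_self]

lemma halfTvDist_comp_le (κ : Kernel E F) [IsMarkovKernel κ] (α β : Measure E)
    [IsProbabilityMeasure α] [IsProbabilityMeasure β] :
    halfTvDist (κ ∘ₘ α) (κ ∘ₘ β) ≤ halfTvDist α β := by
  obtain ⟨ρ, -, hρ, hκ⟩ := exists_measure_halfTvDist_comp_le (F := F) α β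
  calc halfTvDist (κ ∘ₘ α) (κ ∘ₘ β) ≤ ∫⁻ p, halfTvDist (κ p.1) (κ p.2) ∂ρ := hκ κ
    _ ≤ ∫⁻ _, 1 ∂ρ := lintegral_mono fun _ => halfTvDist_le_one
    _ = halfTvDist α β := by rw [lintegral_one, hρ]

end Coupling

section Harmonic

variable {α : Type*} [MeasurableSpace α] {κ : Kernel α α} {m : Measure α} {f : α → ℝ≥0∞}

lemma ae_eq_lintegral_of_le_lintegral (hm : κ ∘ₘ m = m) (hf : Measurable f)
    (hfin : ∫⁻ x, f x ∂m ≠ ∞) (hsub : ∀ x, f x ≤ ∫⁻ y, f y ∂κ x) :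
    ∀ᵐ x ∂m, f x = ∫⁻ y, f y ∂κ x :=
  ae_eq_of_ae_le_of_lintegral_le (ae_of_all _ hsub) hfin hf.lintegral_kernel.aemeasurable
    (by rw [← Measure.lintegral_bind κ.aemeasurable hf.aemeasurable, hm])

/-- The maxima with rational levels `q > a` force `f ≤ a` almost everywhere, and the level `0`
gives `∫ f = a`. -/
lemma ae_eq_of_lintegral_max_eq {K : Measure α} [IsProbabilityMeasure K] (hf : Measurable f)
    {a : ℝ≥0∞} (ha : a ≠ ∞)
    (h : ∀ q : ℚ, ∫⁻ y, max (f y) (q : ℝ).toNNReal ∂K = max a (q : ℝ).toNNReal) :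
    ∀ᵐ y ∂K, f y = a := by
  have hle : ∀ q : ℚ, ∀ᵐ y ∂K, a < (q : ℝ).toNNReal → f y ≤ (q : ℝ).toNNReal := by
    intro q
    by_cases hq : a < (q : ℝ).toNNReal
    · have hmax := ae_eq_of_ae_le_of_lintegral_le (f := fun _ => ((q : ℝ).toNNReal : ℝ≥0∞))
        (ae_of_all K fun y => le_max_right (f y) _) (by simp) (by fun_prop)
        (by rw [h q, max_eq_right hq.le]; simp)
      filter_upwards [hmax] with y hy _
      exact (le_max_left _ _).trans hy.symm.le
    · exact ae_of_all _ fun _ h => absurd h hq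
  have hfa : ∀ᵐ y ∂K, f y ≤ a := by
    filter_upwards [ae_all_iff.mpr hle] with y hy
    by_contra! hlt
    obtain ⟨q, -, haq, hqf⟩ := ENNReal.lt_iff_exists_rat_btwn.mp hlt
    exact (hy q haq).not_gt hqf
  have hint : ∫⁻ y, f y ∂K = a := by simpa using h 0
  exact ae_eq_of_ae_le_of_lintegral_le hfa (hint ▸ ha) aemeasurable_const (by simp [hint])

/-- Every `max f q` is subharmonic as well, hence harmonic `m`-almost everywhere. -/
lemma ae_ae_eq_of_le_lintegral_s18 [IsMarkovKernel κ] [IsFiniteMeasure m] (hm : κ ∘ₘ m = m)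
    (hf : Measurable f) {C : ℝ≥0∞} (hC : C ≠ ∞) (hfC : ∀ x, f x ≤ C)
    (hsub : ∀ x, f x ≤ ∫⁻ y, f y ∂κ x) : ∀ᵐ x ∂m, ∀ᵐ y ∂κ x, f y = f x := by
  have hmax : ∀ q : ℚ, ∀ᵐ x ∂m, max (f x) (q : ℝ).toNNReal =
      ∫⁻ y, max (f y) (q : ℝ).toNNReal ∂κ x := by
    intro q
    refine ae_eq_lintegral_of_le_lintegral hm (hf.max measurable_const) ?_
      fun x => max_le ?_ ?_
    · refine ne_top_of_le_ne_top ?_ (lintegral_mono fun x => max_le_max (hfC x) le_rfl)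
      simp [lintegral_const, ENNReal.mul_eq_top, hC]
    · exact (hsub x).trans (lintegral_mono fun y => le_max_left _ _)
    · calc ((q : ℝ).toNNReal : ℝ≥0∞) = ∫⁻ _, ((q : ℝ).toNNReal : ℝ≥0∞) ∂κ x := by simp
        _ ≤ ∫⁻ y, max (f y) (q : ℝ).toNNReal ∂κ x := lintegral_mono fun y => le_max_right _ _
  filter_upwards [ae_all_iff.mpr hmax] with x hx
  exact ae_eq_of_lintegral_max_eq hf (ne_top_of_le_ne_top hC (hfC x)) fun q => (hx q).symm

lemma exists_ae_eq_const_of_ae_ae_eq {β ι : Type*} {κ : ι → Kernel α α}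
    [∀ i, IsMarkovKernel (κ i)] [NeZero m] {g : α → β}
    (hg : ∀ᵐ x ∂m, ∀ i, ∀ᵐ y ∂κ i x, g y = g x) (hac : ∀ x x', ∃ i, κ i x' ≪ κ i x) :
    ∃ b, ∀ᵐ x ∂m, g x = b := by
  obtain ⟨x₀, hx₀⟩ := hg.exists
  refine ⟨g x₀, ?_⟩
  filter_upwards [hg] with x hx
  obtain ⟨i, hi⟩ := hac x x₀
  obtain ⟨y, hyx, hyx₀⟩ := ((hx i).filter_mono hi.ae_le |>.and (hx₀ i)).exists
  exact hyx.symm.trans hyx₀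

end Harmonic

lemma parallelComp_comp_prod_eq {α β γ δ : Type*} [MeasurableSpace α] [MeasurableSpace β]
    [MeasurableSpace γ] [MeasurableSpace δ] (κ : Kernel α β) (η : Kernel γ δ)
    [IsSFiniteKernel κ] [IsSFiniteKernel η] (μ : Measure α) (ν : Measure γ) [SFinite μ]
    [SFinite ν] : (κ ∥ₖ η) ∘ₘ μ.prod ν = (κ ∘ₘ μ).prod (η ∘ₘ ν) :=
  calc (κ ∥ₖ η) ∘ₘ μ.prod ν = ((Kernel.id ∥ₖ η) ∘ₖ (κ ∥ₖ Kernel.id)) ∘ₘ μ.prod ν := by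
        rw [Kernel.parallelComp_id_left_comp_parallelComp, Kernel.comp_id]
    _ = (Kernel.id ∥ₖ η) ∘ₘ (κ ∘ₘ μ).prod ν := by rw [← Measure.comp_assoc, Measure.prod_comp_left]
    _ = (κ ∘ₘ μ).prod (η ∘ₘ ν) := by rw [Measure.prod_comp_right]

section Semigroup

variable {E : Type*} [MeasurableSpace E] {P : ℝ≥0 → Kernel E E}

lemma apply_eq_comp_of_le (hsem : ∀ s t : ℝ≥0, P (s + t) = P t ∘ₖ P s) {s t : ℝ≥0}
    (hst : s ≤ t) (x : E) : P t x = P (t - s) ∘ₘ P s x := by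
  rw [← Kernel.comp_apply, ← hsem, add_tsub_cancel_of_le hst]

lemma eventually_absolutelyContinuous (hsem : ∀ s t : ℝ≥0, P (s + t) = P t ∘ₖ P s)
    (hac : ∀ x y, ∃ t, P t x ≪ P t y) (x y : E) : ∀ᶠ t in atTop, P t x ≪ P t y := by
  obtain ⟨s, hs⟩ := hac x y
  filter_upwards [eventually_ge_atTop s] with t hst
  rw [apply_eq_comp_of_le hsem hst x, apply_eq_comp_of_le hsem hst y]
  exact hs.comp_right _

/-- If no `P n x` were absolutely continuous with respect to `μ`, the union of countably many
witnessing `μ`-null sets would be charged by every `P n x`, but by invariance not by `P n y` for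
`μ`-almost every `y`, contradicting `P n x ≪ P n y` for large `n`. -/
lemma eventually_absolutelyContinuous_of_invariant
    (hsem : ∀ s t : ℝ≥0, P (s + t) = P t ∘ₖ P s) (hac : ∀ x y, ∃ t, P t x ≪ P t y)
    {μ : Measure E} [NeZero μ] (hμ : ∀ t, P t ∘ₘ μ = μ) (x : E) :
    ∀ᶠ t in atTop, P t x ≪ μ := by
  suffices ∃ s, P s x ≪ μ by
    obtain ⟨s, hs⟩ := this
    filter_upwards [eventually_ge_atTop s] with t hst
    rw [apply_eq_comp_of_le hsem hst x, ← hμ (t - s)]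
    exact hs.comp_right _
  by_contra! h
  have hA : ∀ n : ℕ, ∃ A, μ A = 0 ∧ P n x A ≠ 0 := fun n => by
    have := h n
    unfold Measure.AbsolutelyContinuous at this
    push Not at this
    exact this
  choose A hμA hPA using hA
  set B := toMeasurable μ (⋃ n, A n)
  have hB : MeasurableSet B := measurableSet_toMeasurable _ _
  have hμB : μ B = 0 := by rw [measure_toMeasurable]; exact measure_iUnion_null hμA
  have hPB : ∀ᵐ y ∂μ, ∀ n : ℕ, P n y B = 0 := ae_all_iff.mpr fun n => by
    refine (lintegral_eq_zero_iff ((P n).measurable_coe hB)).mp ?_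
    rw [← Measure.bind_apply hB (P n).aemeasurable, hμ, hμB]
  obtain ⟨y, hy⟩ := hPB.exists
  obtain ⟨n, hn⟩ :=
    (tendsto_natCast_atTop_atTop.eventually (eventually_absolutelyContinuous hsem hac x y)).exists
  exact hPA n (measure_mono_null ((subset_iUnion A n).trans (subset_toMeasurable _ _)) (hn (hy n)))

lemma antitone_halfTvDist_of_invariant [∀ t, IsMarkovKernel (P t)]
    (hsem : ∀ s t : ℝ≥0, P (s + t) = P t ∘ₖ P s) {μ : Measure E} [IsProbabilityMeasure μ]
    (hμ : ∀ t, P t ∘ₘ μ = μ) (x : E) : Antitone fun t => halfTvDist (P t x) μ := by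
  intro s t hst
  calc halfTvDist (P t x) μ = halfTvDist (P (t - s) ∘ₘ P s x) (P (t - s) ∘ₘ μ) := by
        rw [apply_eq_comp_of_le hsem hst, hμ]
    _ ≤ halfTvDist (P s x) μ := halfTvDist_comp_le _ _ _

noncomputable def pairDist (P : ℝ≥0 → Kernel E E) (t : ℝ≥0) (p : E × E) : ℝ≥0∞ :=
  halfTvDist (P t p.1) (P t p.2)

noncomputable def limPairDist (P : ℝ≥0 → Kernel E E) (p : E × E) : ℝ≥0∞ :=
  ⨅ n : ℕ, pairDist P n p

variable [∀ t, IsMarkovKernel (P t)]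

lemma pairDist_le_one (t : ℝ≥0) (p : E × E) : pairDist P t p ≤ 1 := halfTvDist_le_one

lemma limPairDist_le_one (p : E × E) : limPairDist P p ≤ 1 :=
  (iInf_le _ 0).trans (pairDist_le_one _ p)

lemma antitone_pairDist (hsem : ∀ s t : ℝ≥0, P (s + t) = P t ∘ₖ P s) : Antitone (pairDist P) :=
  fun s t hst p => by
    simp only [pairDist, apply_eq_comp_of_le hsem hst]
    exact halfTvDist_comp_le _ _ _

lemma pairDist_add_le_lintegral (hsem : ∀ s t : ℝ≥0, P (s + t) = P t ∘ₖ P s) (s t : ℝ≥0)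
    (p : E × E) : pairDist P (s + t) p ≤ ∫⁻ q, pairDist P t q ∂(P s ∥ₖ P s) p := by
  rw [Kernel.parallelComp_apply]
  simp only [pairDist, hsem, Kernel.comp_apply]
  exact halfTvDist_comp_le_lintegral_prod _ _ _

variable [MeasurableSpace.CountablyGenerated E]

lemma measurable_pairDist (t : ℝ≥0) : Measurable (pairDist P t) :=
  measurable_halfTvDist_kernel ((P t).comap Prod.fst measurable_fst)
    ((P t).comap Prod.snd measurable_snd)

lemma measurable_limPairDist : Measurable (limPairDist P) :=
  .iInf fun n => measurable_pairDist n

lemma lintegral_limPairDist (hsem : ∀ s t : ℝ≥0, P (s + t) = P t ∘ₖ P s)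
    (π : Measure (E × E)) [IsFiniteMeasure π] :
    ∫⁻ p, limPairDist P p ∂π = ⨅ n : ℕ, ∫⁻ p, pairDist P n p ∂π :=
  lintegral_iInf (fun n => measurable_pairDist n)
    (fun _ _ hij => antitone_pairDist hsem (Nat.cast_le.mpr hij))
    (ne_top_of_le_ne_top (measure_ne_top π univ)
      ((lintegral_mono fun p => pairDist_le_one _ p).trans_eq (lintegral_one)))

lemma limPairDist_le_lintegral (hsem : ∀ s t : ℝ≥0, P (s + t) = P t ∘ₖ P s) (n : ℕ)
    (p : E × E) : limPairDist P p ≤ ∫⁻ q, limPairDist P q ∂(P n ∥ₖ P n) p := by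
  rw [lintegral_limPairDist hsem]
  refine le_iInf fun k => (iInf_le _ (n + k)).trans ?_
  rw [Nat.cast_add]
  exact pairDist_add_le_lintegral hsem _ _ p

variable {μ : Measure E} [IsProbabilityMeasure μ]

lemma limPairDist_ae_eq_const (hsem : ∀ s t : ℝ≥0, P (s + t) = P t ∘ₖ P s)
    (hac : ∀ x y, ∃ t, P t x ≪ P t y) (hμ : ∀ t, P t ∘ₘ μ = μ) :
    ∃ a, ∀ᵐ p ∂μ.prod μ, limPairDist P p = a := by
  refine exists_ae_eq_const_of_ae_ae_eq (κ := fun n : ℕ => P n ∥ₖ P n)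
    (ae_all_iff.mpr fun n => ?_) fun p p' => ?_
  · exact ae_ae_eq_of_le_lintegral_s18 (by rw [parallelComp_comp_prod_eq, hμ])
      measurable_limPairDist one_ne_top limPairDist_le_one (limPairDist_le_lintegral hsem n)
  · obtain ⟨n, h₁, h₂⟩ := (tendsto_natCast_atTop_atTop.eventually
      ((eventually_absolutelyContinuous hsem hac p'.1 p.1).and
        (eventually_absolutelyContinuous hsem hac p'.2 p.2))).exists
    exact ⟨n, by simpa only [Kernel.parallelComp_apply] using h₁.prod h₂⟩

lemma limPairDist_ae_eq_zero (hsem : ∀ s t : ℝ≥0, P (s + t) = P t ∘ₖ P s)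
    (hac : ∀ x y, ∃ t, P t x ≪ P t y) (hμ : ∀ t, P t ∘ₘ μ = μ) :
    ∀ᵐ p ∂μ.prod μ, limPairDist P p = 0 := by
  obtain ⟨a, ha⟩ := limPairDist_ae_eq_const hsem hac hμ
  obtain ⟨⟨x, y⟩, hxy⟩ := ha.exists
  obtain ⟨m, hxμ, hyμ, hxy'⟩ := (tendsto_natCast_atTop_atTop.eventually
    ((eventually_absolutelyContinuous_of_invariant hsem hac hμ x).and
      ((eventually_absolutelyContinuous_of_invariant hsem hac hμ y).and
        (eventually_absolutelyContinuous hsem hac x y)))).exists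
  obtain ⟨ρ, hρ, hρuniv, hcoupling⟩ := exists_measure_halfTvDist_comp_le (F := E) (P m x) (P m y)
  have : IsFiniteMeasure ρ := ⟨hρuniv ▸ halfTvDist_le_one.trans_lt one_lt_top⟩
  have hle : a ≤ a * halfTvDist (P m x) (P m y) :=
    calc a = limPairDist P (x, y) := hxy.symm
      _ ≤ ⨅ n : ℕ, ∫⁻ p, pairDist P n p ∂ρ := le_iInf fun n => (iInf_le _ (m + n)).trans <| by
          rw [pairDist, Nat.cast_add, hsem, Kernel.comp_apply, Kernel.comp_apply]
          exact hcoupling _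
      _ = ∫⁻ p, limPairDist P p ∂ρ := (lintegral_limPairDist hsem ρ).symm
      _ = ∫⁻ _, a ∂ρ := lintegral_congr_ae (ha.filter_mono (hρ.trans (hxμ.prod hyμ)).ae_le)
      _ = a * halfTvDist (P m x) (P m y) := by rw [lintegral_const, hρuniv]
  have ha0 : a = 0 := by
    by_contra h
    have ha_top : a ≠ ∞ := ne_top_of_le_ne_top one_ne_top (hxy ▸ limPairDist_le_one _)
    have := ENNReal.mul_lt_mul_left h ha_top (halfTvDist_lt_one_of_absolutelyContinuous hxy')
    rw [one_mul, mul_comm] at this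
    exact (hle.trans_lt this).false
  filter_upwards [ha] with p hp using hp.trans ha0

lemma tendsto_halfTvDist_of_invariant (hsem : ∀ s t : ℝ≥0, P (s + t) = P t ∘ₖ P s)
    (hac : ∀ x y, ∃ t, P t x ≪ P t y) (hμ : ∀ t, P t ∘ₘ μ = μ) (x : E) :
    Tendsto (fun t => halfTvDist (P t x) μ) atTop (nhds 0) := by
  obtain ⟨M, hM⟩ := (tendsto_natCast_atTop_atTop.eventually
    (eventually_absolutelyContinuous_of_invariant hsem hac hμ x)).exists
  suffices ⨅ t, halfTvDist (P t x) μ = 0 from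
    this ▸ tendsto_atTop_iInf (antitone_halfTvDist_of_invariant hsem hμ x)
  refine nonpos_iff_eq_zero.mp ?_
  calc ⨅ t, halfTvDist (P t x) μ ≤ ⨅ n : ℕ, ∫⁻ p, pairDist P n p ∂(P M x).prod μ := by
        refine le_iInf fun n => (iInf_le _ ((M + n : ℕ) : ℝ≥0)).trans ?_
        calc halfTvDist (P (M + n : ℕ) x) μ = halfTvDist (P n ∘ₘ P M x) (P n ∘ₘ μ) := by
              rw [Nat.cast_add, hsem, Kernel.comp_apply, hμ]
          _ ≤ _ := halfTvDist_comp_le_lintegral_prod _ _ _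
    _ = ∫⁻ p, limPairDist P p ∂(P M x).prod μ := (lintegral_limPairDist hsem _).symm
    _ = 0 := by
        rw [lintegral_congr_ae ((limPairDist_ae_eq_zero hsem hac hμ).filter_mono
          (hM.prod .rfl).ae_le), lintegral_zero]

end Semigroup

theorem doob_continuous_time_general
    {E : Type*} [MeasurableSpace E] [MeasurableSpace.CountablyGenerated E]
    (P : ℝ≥0 → ProbabilityTheory.Kernel E E) (hP : ∀ t, IsMarkovKernel (P t))
    (hsem : ∀ s t : ℝ≥0, P (s + t) = (P t) ∘ₖ (P s))
    (hreg : ∀ x y : E, ∃ t : ℝ≥0, 0 < t ∧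
      P t x ≪ P t y ∧ P t y ≪ P t x) :
    (∀ μ₁ μ₂ : Measure E, IsProbabilityMeasure μ₁ → IsProbabilityMeasure μ₂ →
      (∀ (t : ℝ≥0) (A : Set E), MeasurableSet A → μ₁ A = ∫⁻ x, P t x A ∂μ₁) →
      (∀ (t : ℝ≥0) (A : Set E), MeasurableSet A → μ₂ A = ∫⁻ x, P t x A ∂μ₂) → μ₁ = μ₂) ∧
    (∀ μ : Measure E, IsProbabilityMeasure μ →
      (∀ (t : ℝ≥0) (A : Set E), MeasurableSet A → μ A = ∫⁻ x, P t x A ∂μ) →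
      ∀ x : E, Tendsto (fun t : ℝ≥0 => tvDist (P t x) μ) atTop (nhds 0)) := by
  have hac : ∀ x y, ∃ t, P t x ≪ P t y := fun x y => (hreg x y).imp fun _ ht => ht.2.1
  have hinv : ∀ μ : Measure E,
      (∀ (t : ℝ≥0) (A : Set E), MeasurableSet A → μ A = ∫⁻ x, P t x A ∂μ) →
      ∀ t, P t ∘ₘ μ = μ := fun μ hμ t =>
    Measure.ext fun A hA => by rw [Measure.bind_apply hA (P t).aemeasurable, hμ t A hA]
  refine ⟨fun μ₁ μ₂ _ _ hμ₁ hμ₂ => ?_, fun μ _ hμ x => ?_⟩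
  · obtain ⟨x⟩ := nonempty_of_isProbabilityMeasure μ₁
    exact eq_of_tendsto_halfTvDist (tendsto_halfTvDist_of_invariant hsem hac (hinv μ₁ hμ₁) x)
      (tendsto_halfTvDist_of_invariant hsem hac (hinv μ₂ hμ₂) x)
  · simpa [tvDist_eq_two_mul_halfTvDist] using
      ENNReal.Tendsto.const_mul (tendsto_halfTvDist_of_invariant hsem hac (hinv μ hμ) x)
        (Or.inr ofNat_ne_top)

/-- **Continuous-time Doob theorem.** Let `(P_t)_{t ≥ 0}` be a Markov semigroup
(`P_{s+t}(x,A) = ∫ P_t(y,A) P_s(x,dy)`, `P_0 = id`; no regularity in `t` is required) on a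
countably generated measurable space with measurable diagonal. If for each pair `x, y` there
is `t > 0` with `P_t(x,·) ∼ P_t(y,·)`, then there is at most one invariant probability
measure, and if an invariant `μ` exists then `‖P_t(x,·) - μ‖ → 0` as `t → ∞`, for every `x`. -/
theorem doob_continuous_time
    {E : Type*} [MeasurableSpace E] [MeasurableSpace.CountablyGenerated E]
    (hΔ : MeasurableSet {p : E × E | p.1 = p.2})
    (P : ℝ≥0 → ProbabilityTheory.Kernel E E) (hP : ∀ t, IsMarkovKernel (P t))
    (h0 : P 0 = ProbabilityTheory.Kernel.id)
    (hsem : ∀ s t : ℝ≥0, P (s + t) = (P t) ∘ₖ (P s))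
    (hreg : ∀ x y : E, ∃ t : ℝ≥0, 0 < t ∧
      P t x ≪ P t y ∧ P t y ≪ P t x) :
    (∀ μ₁ μ₂ : Measure E, IsProbabilityMeasure μ₁ → IsProbabilityMeasure μ₂ →
      (∀ (t : ℝ≥0) (A : Set E), MeasurableSet A → μ₁ A = ∫⁻ x, P t x A ∂μ₁) →
      (∀ (t : ℝ≥0) (A : Set E), MeasurableSet A → μ₂ A = ∫⁻ x, P t x A ∂μ₂) → μ₁ = μ₂) ∧
    (∀ μ : Measure E, IsProbabilityMeasure μ →
      (∀ (t : ℝ≥0) (A : Set E), MeasurableSet A → μ A = ∫⁻ x, P t x A ∂μ) →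
      ∀ x : E, Tendsto (fun t : ℝ≥0 => tvDist (P t x) μ) atTop (nhds 0)) :=
  doob_continuous_time_general P hP hsem hreg
end

section
/- Let P be a Markov kernel on a measurable space (E, 𝓔) with n-step kernels P_n. Suppose μ₁ and μ₂ are invariant probability measures such that, for i = 1, 2 and μᵢ-almost all x, ‖P_n(x,·) − μᵢ‖ → 0 as n → ∞, and suppose μ₁ ≪ μ₂ (μ₁ is absolutely continuous with respect to μ₂). Then μ₁ = μ₂. -/
open MeasureTheory ProbabilityTheory Filter ENNReal

/-! Since `μ₁ ≪ μ₂`, some point `x` lies in both sets of convergence, so `P_n(x, ·)` converges in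
total variation to both `μ₁` and `μ₂`; limits in total variation are unique. -/

section TotalVariation

variable {E : Type*} [MeasurableSpace E]

lemma tvDist_comm (μ ν : Measure E) : tvDist μ ν = tvDist ν μ := by
  simp only [tvDist, sup_comm]

lemma measure_sub_le_tvDist (μ ν : Measure E) {A : Set E} (hA : MeasurableSet A) :
    μ A - ν A ≤ tvDist μ ν :=
  calc μ A - ν A ≤ ⨆ (B : Set E) (_ : MeasurableSet B), ((μ B - ν B) ⊔ (ν B - μ B)) :=
        le_sup_left.trans <|
          le_iSup₂ (f := fun (B : Set E) (_ : MeasurableSet B) => (μ B - ν B) ⊔ (ν B - μ B)) A hA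
    _ ≤ tvDist μ ν := le_mul_of_one_le_left zero_le one_le_two

lemma measure_le_add_tvDist (μ ν : Measure E) {A : Set E} (hA : MeasurableSet A) :
    μ A ≤ ν A + tvDist μ ν :=
  tsub_le_iff_left.mp (measure_sub_le_tvDist μ ν hA)

lemma measure_le_of_tendsto_tvDist {ι : Type*} {l : Filter ι} [l.NeBot] {ν : ι → Measure E}
    {μ μ' : Measure E} (h : Tendsto (fun i => tvDist (ν i) μ) l (nhds 0))
    (h' : Tendsto (fun i => tvDist (ν i) μ') l (nhds 0)) {A : Set E} (hA : MeasurableSet A) :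
    μ A ≤ μ' A := by
  have hbound : ∀ i, μ A ≤ μ' A + tvDist (ν i) μ' + tvDist (ν i) μ := fun i =>
    calc μ A ≤ ν i A + tvDist (ν i) μ := by
          rw [tvDist_comm]; exact measure_le_add_tvDist μ (ν i) hA
      _ ≤ μ' A + tvDist (ν i) μ' + tvDist (ν i) μ := by
          gcongr; exact measure_le_add_tvDist (ν i) μ' hA
  have hlim : Tendsto (fun i => μ' A + tvDist (ν i) μ' + tvDist (ν i) μ) l (nhds (μ' A)) := by
    simpa using (tendsto_const_nhds.add h').add h
  exact ge_of_tendsto' hlim hbound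

theorem eq_of_tendsto_tvDist {ι : Type*} {l : Filter ι} [l.NeBot] {ν : ι → Measure E}
    {μ μ' : Measure E} (h : Tendsto (fun i => tvDist (ν i) μ) l (nhds 0))
    (h' : Tendsto (fun i => tvDist (ν i) μ') l (nhds 0)) : μ = μ' :=
  Measure.ext fun _ hA =>
    le_antisymm (measure_le_of_tendsto_tvDist h h' hA) (measure_le_of_tendsto_tvDist h' h hA)

end TotalVariation

theorem invariant_eq_of_absolutelyContinuous_general
    {E : Type*} [MeasurableSpace E]
    (P : ProbabilityTheory.Kernel E E)
    (μ₁ μ₂ : Measure E) [IsProbabilityMeasure μ₁]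
    (hconv₁ : ∀ᵐ x ∂μ₁, Tendsto (fun n => tvDist (nStep P n x) μ₁) atTop (nhds 0))
    (hconv₂ : ∀ᵐ x ∂μ₂, Tendsto (fun n => tvDist (nStep P n x) μ₂) atTop (nhds 0))
    (hac : μ₁ ≪ μ₂) :
    μ₁ = μ₂ := by
  obtain ⟨x, h₁, h₂⟩ := (hconv₁.and (hac.ae_le hconv₂)).exists
  exact eq_of_tendsto_tvDist h₁ h₂

/-- If `μ₁, μ₂` are invariant probability measures such that `‖P_n(x,·) - μᵢ‖ → 0` for
`μᵢ`-a.a. `x` (`i = 1, 2`), and `μ₁ ≪ μ₂`, then `μ₁ = μ₂`. -/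
theorem invariant_eq_of_absolutelyContinuous
    {E : Type*} [MeasurableSpace E]
    (P : ProbabilityTheory.Kernel E E) [IsMarkovKernel P]
    (μ₁ μ₂ : Measure E) [IsProbabilityMeasure μ₁] [IsProbabilityMeasure μ₂]
    (hinv₁ : ∀ A : Set E, MeasurableSet A → μ₁ A = ∫⁻ x, P x A ∂μ₁)
    (hinv₂ : ∀ A : Set E, MeasurableSet A → μ₂ A = ∫⁻ x, P x A ∂μ₂)
    (hconv₁ : ∀ᵐ x ∂μ₁, Tendsto (fun n => tvDist (nStep P n x) μ₁) atTop (nhds 0))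
    (hconv₂ : ∀ᵐ x ∂μ₂, Tendsto (fun n => tvDist (nStep P n x) μ₂) atTop (nhds 0))
    (hac : μ₁ ≪ μ₂) :
    μ₁ = μ₂ :=
  invariant_eq_of_absolutelyContinuous_general P μ₁ μ₂ hconv₁ hconv₂ hac
end
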